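/- arXiv:1703.05212 — 8 statements merged into one kernel-verified Lean document; each statement's English description precedes it below -/
import Mathlib

section
/- Every separable metric space has a proper dyadic subbase. -/
open TopologicalSpace

/-- The boundary set `S_k^∂ = X \ (S_k^0 ∪ S_k^1)`. -/
def dyadicBd {X : Type*} (S : ℕ → Bool → Set X) (k : ℕ) : Set X :=
  (S k false ∪ S k true)ᶜ

/-- `S(σ)` for a finite partial function `σ` from ℕ to `{0,1}`, encoded by a finite
domain `dom` and values `σ : ℕ → Bool`. -/
def dyadicOpen {X : Type*} (S : ℕ → Bool → Set X) (dom : Finset ℕ) (σ : ℕ → Bool) : Set X :=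
  ⋂ k ∈ dom, S k (σ k)

/-- `S̄(σ)` for a finite partial function `σ` from ℕ to `{0,1}`. -/
def dyadicClosed {X : Type*} (S : ℕ → Bool → Set X) (dom : Finset ℕ) (σ : ℕ → Bool) : Set X :=
  ⋂ k ∈ dom, (S k (σ k) ∪ dyadicBd S k)

/-!
Fix a dense sequence `c` and put `S_n^0 = B(c_i, r_n)`, `S_n^1 = {x | r_n < d(x, c_i)}` for
`n = ⟨i, k⟩`, with `r_n ∈ (1/(k+2), 1/(k+1))`; whatever the choice of the radii, the balls `S_n^0`
form a basis. For properness one inducts on the largest index `n` of `dom σ`: the only points of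
`S̄(σ)` that need an argument are those on the sphere `d(·, c_i) = r_n`, and these are limits of
points of `S̄(σ)` strictly inside and strictly outside the sphere unless `r_n` is a local extreme
value of `d(·, c_i)` on one of the countably many closed sets `S̄(τ)` with `dom τ ⊆ {0, …, n-1}`.
In a second-countable space a function has only countably many local extreme values on a given
set, so `r_n` can be chosen recursively in the uncountable interval avoiding all of them.
-/

open Set Filter Topology Metric

section LocalExtr

variable {X β : Type*} [TopologicalSpace X] [LinearOrder β]

def localExtrValuesOn (f : X → β) (s : Set X) : Set β :=
  f '' {x ∈ s | IsLocalExtrOn f s x}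

/- Each local minimum value of `f` on `s` is the least value of `f` on `V ∩ s` for some basic
open set `V`, and a set has at most one least element. -/
theorem countable_image_isLocalMinOn [SecondCountableTopology X] (f : X → β) (s : Set X) :
    (f '' {x ∈ s | IsLocalMinOn f s x}).Countable := by
  have hsub : f '' {x ∈ s | IsLocalMinOn f s x} ⊆
      ⋃ V ∈ countableBasis X, {b | IsLeast (f '' (V ∩ s)) b} := by
    rintro _ ⟨x, ⟨hxs, hmin⟩, rfl⟩
    obtain ⟨U, hU, hUmin⟩ := mem_nhdsWithin_iff_exists_mem_nhds_inter.mp hmin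
    obtain ⟨V, hVB, hxV, hVU⟩ := (isBasis_countableBasis X).mem_nhds_iff.mp hU
    refine mem_biUnion hVB ⟨mem_image_of_mem f ⟨hxV, hxs⟩, ?_⟩
    rintro _ ⟨y, hy, rfl⟩
    exact hUmin ⟨hVU hy.1, hy.2⟩
  refine ((countable_countableBasis X).biUnion fun V _ => ?_).mono hsub
  exact Subsingleton.countable fun _ ha _ hb => ha.unique hb

theorem countable_localExtrValuesOn [SecondCountableTopology X] (f : X → β) (s : Set X) :
    (localExtrValuesOn f s).Countable := by
  refine ((countable_image_isLocalMinOn f s).union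
    (countable_image_isLocalMinOn (β := βᵒᵈ) f s)).mono ?_
  rintro _ ⟨x, ⟨hxs, hmin | hmax⟩, rfl⟩
  exacts [Or.inl ⟨x, ⟨hxs, hmin⟩, rfl⟩, Or.inr ⟨x, ⟨hxs, hmax⟩, rfl⟩]

theorem mem_closure_inter_lt_of_not_isLocalMinOn {f : X → β} {s : Set X} {x : X}
    (h : ¬IsLocalMinOn f s x) : x ∈ closure (s ∩ {y | f y < f x}) := by
  by_contra hx
  rw [mem_closure_iff_frequently, not_frequently] at hx
  exact h (eventually_nhdsWithin_iff.mpr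
    (hx.mono fun y hy hys => not_lt.mp fun hlt => hy ⟨hys, hlt⟩))

theorem mem_closure_inter_gt_of_not_isLocalMaxOn {f : X → β} {s : Set X} {x : X}
    (h : ¬IsLocalMaxOn f s x) : x ∈ closure (s ∩ {y | f x < f y}) :=
  mem_closure_inter_lt_of_not_isLocalMinOn (β := βᵒᵈ) h

end LocalExtr

theorem exists_seq_of_forall_exists_next {α : Type*} [Nonempty α] (P : ℕ → (ℕ → α) → α → Prop)
    (hP : ∀ n r r', (∀ m < n, r m = r' m) → ∀ a, P n r a → P n r' a)
    (h : ∀ n r, ∃ a, P n r a) : ∃ r : ℕ → α, ∀ n, P n r (r n) := by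
  choose next hnext using h
  -- `pre n` holds the first `n` terms of the sequence.
  let pre : ℕ → ℕ → α := fun n =>
    n.rec (fun _ => Classical.arbitrary α) fun n f => Function.update f n (next n f)
  have pre_succ (n : ℕ) : pre (n + 1) = Function.update (pre n) n (next n (pre n)) := rfl
  have pre_stable (m n : ℕ) (hmn : m < n) : pre n m = pre (m + 1) m := by
    induction n with
    | zero => omega
    | succ n ih =>
      rcases Nat.lt_succ_iff_lt_or_eq.mp hmn with hlt | rfl
      · rw [pre_succ, Function.update_of_ne hlt.ne, ih hlt]
      · rfl
  refine ⟨fun n => pre (n + 1) n, fun n => ?_⟩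
  dsimp only
  rw [pre_succ, Function.update_self]
  exact hP n (pre n) _ (fun m hm => pre_stable m n hm) _ (hnext n (pre n))

theorem TopologicalSpace.IsTopologicalBasis.eq_generateFrom_of_subset {X : Type*}
    [t : TopologicalSpace X] {B 𝒮 : Set (Set X)} (hB : IsTopologicalBasis B) (hB𝒮 : B ⊆ 𝒮)
    (h𝒮 : ∀ s ∈ 𝒮, IsOpen s) : t = generateFrom 𝒮 :=
  le_antisymm (le_generateFrom h𝒮) ((generateFrom_anti hB𝒮).trans hB.eq_generateFrom.ge)

section DyadicSubbase

variable {X : Type*} {S : ℕ → Bool → Set X}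

theorem union_dyadicBd_eq_compl (hS : ∀ n, S n false ∩ S n true = ∅) (n : ℕ) (b : Bool) :
    S n b ∪ dyadicBd S n = (S n !b)ᶜ := by
  ext x
  have hx : ¬(x ∈ S n false ∧ x ∈ S n true) := fun h => (hS n).subset h
  cases b <;> simp only [dyadicBd, mem_union, mem_compl_iff, Bool.not_false, Bool.not_true] <;>
    tauto

theorem dyadicOpen_insert (n : ℕ) (dom : Finset ℕ) (σ : ℕ → Bool) :
    dyadicOpen S (insert n dom) σ = S n (σ n) ∩ dyadicOpen S dom σ :=
  Finset.set_biInter_insert _ _ _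

theorem dyadicClosed_insert (n : ℕ) (dom : Finset ℕ) (σ : ℕ → Bool) :
    dyadicClosed S (insert n dom) σ = (S n (σ n) ∪ dyadicBd S n) ∩ dyadicClosed S dom σ :=
  Finset.set_biInter_insert _ _ _

theorem dyadicClosed_congr {S' : ℕ → Bool → Set X} {dom : Finset ℕ}
    (h : ∀ n ∈ dom, S n = S' n) (σ : ℕ → Bool) :
    dyadicClosed S dom σ = dyadicClosed S' dom σ := by
  unfold dyadicClosed dyadicBd
  exact iInter₂_congr fun n hn => by rw [h n hn]

theorem finite_range_dyadicClosed (S : ℕ → Bool → Set X) (dom : Finset ℕ) :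
    (range (dyadicClosed S dom)).Finite := by
  refine (finite_range fun τ : dom → Bool => ⋂ k : dom, (S k (τ k) ∪ dyadicBd S k)).subset ?_
  rintro _ ⟨σ, rfl⟩
  exact ⟨fun k => σ k, by simp only [dyadicClosed, iInter_subtype]⟩

variable [TopologicalSpace X]

theorem isClosed_dyadicClosed (hopen : ∀ n b, IsOpen (S n b))
    (hS : ∀ n, S n false ∩ S n true = ∅) (dom : Finset ℕ) (σ : ℕ → Bool) :
    IsClosed (dyadicClosed S dom σ) :=
  isClosed_biInter fun n _ => by
    rw [union_dyadicBd_eq_compl hS]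
    exact (hopen n _).isClosed_compl

theorem closure_dyadicOpen_subset (hopen : ∀ n b, IsOpen (S n b))
    (hS : ∀ n, S n false ∩ S n true = ∅) (dom : Finset ℕ) (σ : ℕ → Bool) :
    closure (dyadicOpen S dom σ) ⊆ dyadicClosed S dom σ :=
  closure_minimal (iInter₂_mono fun _ _ => subset_union_left)
    (isClosed_dyadicClosed hopen hS dom σ)

theorem dyadicClosed_insert_eq_closure (hopen : ∀ n b, IsOpen (S n b))
    (hS : ∀ n, S n false ∩ S n true = ∅) {n : ℕ} {dom : Finset ℕ} {σ : ℕ → Bool}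
    (hdom : dyadicClosed S dom σ = closure (dyadicOpen S dom σ))
    (hbd : dyadicClosed S dom σ ∩ dyadicBd S n ⊆ closure (dyadicClosed S dom σ ∩ S n (σ n))) :
    dyadicClosed S (insert n dom) σ = closure (dyadicOpen S (insert n dom) σ) := by
  refine (closure_dyadicOpen_subset hopen hS _ σ).antisymm' ?_
  have hside : dyadicClosed S dom σ ∩ S n (σ n) ⊆ closure (dyadicOpen S (insert n dom) σ) := by
    rintro x ⟨hx, hxn⟩
    rw [dyadicOpen_insert]
    exact (hopen n _).inter_closure ⟨hxn, hdom ▸ hx⟩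
  rw [dyadicClosed_insert]
  rintro x ⟨hxn | hxbd, hx⟩
  · exact hside ⟨hx, hxn⟩
  · exact closure_minimal hside isClosed_closure (hbd ⟨hx, hxbd⟩)

theorem dyadicClosed_eq_closure_of_boundary (hopen : ∀ n b, IsOpen (S n b))
    (hS : ∀ n, S n false ∩ S n true = ∅)
    (hbd : ∀ n (dom : Finset ℕ), (∀ k ∈ dom, k < n) → ∀ σ,
      dyadicClosed S dom σ ∩ dyadicBd S n ⊆ closure (dyadicClosed S dom σ ∩ S n (σ n)))
    (dom : Finset ℕ) (σ : ℕ → Bool) :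
    dyadicClosed S dom σ = closure (dyadicOpen S dom σ) := by
  induction dom using Finset.induction_on_max with
  | empty => simp [dyadicClosed, dyadicOpen]
  | insert n dom hlt ih => exact dyadicClosed_insert_eq_closure hopen hS ih (hbd n dom hlt σ)

end DyadicSubbase

section LevelSubbase

variable {X β : Type*} [LinearOrder β]

def levelSubbase (g : ℕ → X → β) (r : ℕ → β) (n : ℕ) : Bool → Set X
  | false => {x | g n x < r n}
  | true => {x | r n < g n x}

theorem isOpen_levelSubbase [TopologicalSpace X] [TopologicalSpace β] [OrderClosedTopology β]
    {g : ℕ → X → β} (hg : ∀ n, Continuous (g n)) (r : ℕ → β) (n : ℕ) (b : Bool) :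
    IsOpen (levelSubbase g r n b) := by
  cases b
  exacts [isOpen_lt (hg n) continuous_const, isOpen_lt continuous_const (hg n)]

theorem levelSubbase_false_inter_true (g : ℕ → X → β) (r : ℕ → β) (n : ℕ) :
    levelSubbase g r n false ∩ levelSubbase g r n true = ∅ :=
  eq_empty_of_forall_notMem fun _ hx => lt_asymm hx.1 hx.2

theorem dyadicBd_levelSubbase (g : ℕ → X → β) (r : ℕ → β) (n : ℕ) :
    dyadicBd (levelSubbase g r) n = {x | g n x = r n} := by
  ext x
  simp [dyadicBd, levelSubbase, le_antisymm_iff, and_comm]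

theorem levelSubbase_congr (g : ℕ → X → β) {r r' : ℕ → β} {n : ℕ} (h : r n = r' n) :
    levelSubbase g r n = levelSubbase g r' n := by
  funext b
  cases b <;> simp [levelSubbase, h]

theorem dyadicClosed_levelSubbase_eq_closure [TopologicalSpace X] [TopologicalSpace β]
    [OrderClosedTopology β] {g : ℕ → X → β} (hg : ∀ n, Continuous (g n)) {r : ℕ → β}
    (hr : ∀ n (dom : Finset ℕ), (∀ k ∈ dom, k < n) → ∀ σ,
      r n ∉ localExtrValuesOn (g n) (dyadicClosed (levelSubbase g r) dom σ))
    (dom : Finset ℕ) (σ : ℕ → Bool) :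
    dyadicClosed (levelSubbase g r) dom σ = closure (dyadicOpen (levelSubbase g r) dom σ) := by
  refine dyadicClosed_eq_closure_of_boundary (isOpen_levelSubbase hg r)
    (levelSubbase_false_inter_true g r) (fun n dom hdom σ => ?_) dom σ
  rintro x ⟨hx, hxbd⟩
  obtain hxbd : g n x = r n := (dyadicBd_levelSubbase g r n).subset hxbd
  have hext : ¬IsLocalExtrOn (g n) (dyadicClosed (levelSubbase g r) dom σ) x :=
    fun h => hr n dom hdom σ ⟨x, ⟨hx, h⟩, hxbd⟩
  cases σ n
  · simpa only [levelSubbase, hxbd] using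
      mem_closure_inter_lt_of_not_isLocalMinOn fun h => hext (Or.inl h)
  · simpa only [levelSubbase, hxbd] using
      mem_closure_inter_gt_of_not_isLocalMaxOn fun h => hext (Or.inr h)

end LevelSubbase

theorem exists_levelSubbase_dyadicClosed_eq_closure {X : Type*} [TopologicalSpace X]
    [SecondCountableTopology X] {g : ℕ → X → ℝ} (hg : ∀ n, Continuous (g n)) {J : ℕ → Set ℝ}
    (hJ : ∀ n, ¬(J n).Countable) :
    ∃ r : ℕ → ℝ, (∀ n, r n ∈ J n) ∧ ∀ dom σ,
      dyadicClosed (levelSubbase g r) dom σ = closure (dyadicOpen (levelSubbase g r) dom σ) := by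
  let P (n : ℕ) (r : ℕ → ℝ) (a : ℝ) : Prop := a ∈ J n ∧ ∀ dom : Finset ℕ, (∀ k ∈ dom, k < n) →
    ∀ σ, a ∉ localExtrValuesOn (g n) (dyadicClosed (levelSubbase g r) dom σ)
  have hP : ∀ n r r', (∀ m < n, r m = r' m) → ∀ a, P n r a → P n r' a := by
    rintro n r r' hrr' a ⟨haJ, ha⟩
    refine ⟨haJ, fun dom hdom σ => ?_⟩
    rw [← dyadicClosed_congr (fun k hk => levelSubbase_congr g (hrr' k (hdom k hk)))]
    exact ha dom hdom σ
  have hex : ∀ n r, ∃ a, P n r a := by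
    intro n r
    have hbad : (⋃ dom : Finset ℕ, ⋃ T ∈ range (dyadicClosed (levelSubbase g r) dom),
        localExtrValuesOn (g n) T).Countable :=
      countable_iUnion fun dom => (finite_range_dyadicClosed _ dom).countable.biUnion
        fun T _ => countable_localExtrValuesOn (g n) T
    obtain ⟨a, haJ, ha⟩ := not_subset.mp fun h => hJ n (hbad.mono h)
    exact ⟨a, haJ, fun dom _ σ haσ => ha (mem_iUnion.mpr ⟨dom, mem_biUnion ⟨σ, rfl⟩ haσ⟩)⟩
  obtain ⟨r, hr⟩ := exists_seq_of_forall_exists_next P hP hex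
  exact ⟨r, fun n => (hr n).1, dyadicClosed_levelSubbase_eq_closure hg fun n => (hr n).2⟩

theorem isTopologicalBasis_ball_of_denseRange {X : Type*} [PseudoMetricSpace X] {c : ℕ → X}
    (hc : DenseRange c) {ρ : ℕ → ℝ}
    (hρ : ∀ n, ρ n ∈ Ioo (1 / (n.unpair.2 + 2 : ℝ)) (1 / (n.unpair.2 + 1))) :
    IsTopologicalBasis (range fun n => ball (c n.unpair.1) (ρ n)) := by
  refine isTopologicalBasis_of_isOpen_of_nhds (by rintro _ ⟨n, rfl⟩; exact isOpen_ball) ?_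
  intro x U hxU hU
  obtain ⟨ε, hε, hball⟩ := Metric.isOpen_iff.mp hU x hxU
  obtain ⟨k, hk⟩ := exists_nat_one_div_lt (half_pos hε)
  obtain ⟨i, hi⟩ := Metric.denseRange_iff.mp hc x (1 / (k + 2)) (by positivity)
  have hρk := hρ (Nat.pair i k)
  simp only [Nat.unpair_pair] at hρk
  have hk' : (1 : ℝ) / (k + 2) ≤ 1 / (k + 1) := by gcongr; linarith
  refine ⟨_, ⟨Nat.pair i k, rfl⟩, ?_, (ball_subset_ball' ?_).trans hball⟩
  · simpa only [mem_ball, Nat.unpair_pair] using hi.trans hρk.1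
  · simp only [Nat.unpair_pair]
    rw [dist_comm]
    linarith [hρk.2]

/-- Every separable metric space has a proper dyadic subbase. -/
theorem exists_proper_dyadicSubbase (X : Type*) [MetricSpace X] [SeparableSpace X] :
    ∃ S : ℕ → Bool → Set X,
      (∀ n a, IsOpen (S n a)) ∧
      (∀ n, S n false ∩ S n true = ∅) ∧
      ((inferInstance : TopologicalSpace X) =
        TopologicalSpace.generateFrom {U : Set X | ∃ n a, U = S n a}) ∧
      (∀ (dom : Finset ℕ) (σ : ℕ → Bool),
        dyadicClosed S dom σ = closure (dyadicOpen S dom σ)) := by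
  rcases isEmpty_or_nonempty X with hX | hX
  · exact ⟨fun _ _ => ∅, fun _ _ => isOpen_empty, fun _ => inter_self ∅,
      Subsingleton.elim _ _, fun _ _ => Subsingleton.elim _ _⟩
  have := UniformSpace.secondCountable_of_separable X
  obtain ⟨c, hc⟩ := exists_dense_seq X
  have hg : ∀ n : ℕ, Continuous fun x => dist x (c n.unpair.1) :=
    fun n => continuous_id.dist continuous_const
  obtain ⟨r, hrJ, hproper⟩ := exists_levelSubbase_dyadicClosed_eq_closure hg
    (J := fun n : ℕ => Ioo (1 / (n.unpair.2 + 2 : ℝ)) (1 / (n.unpair.2 + 1)))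
    (fun n => by rw [Cardinal.Real.Ioo_countable_iff, not_le]; gcongr; linarith)
  refine ⟨levelSubbase _ r, isOpen_levelSubbase hg r, levelSubbase_false_inter_true _ r, ?_,
    hproper⟩
  refine (isTopologicalBasis_ball_of_denseRange hc hrJ).eq_generateFrom_of_subset ?_
    (by rintro _ ⟨n, a, rfl⟩; exact isOpen_levelSubbase hg r n a)
  rintro _ ⟨n, rfl⟩
  exact ⟨n, false, rfl⟩
end

section
/- A dyadic subbase S of a second-countable Hausdorff space X is proper if and only if for every finite partial function σ from ℕ to {0,1}, the sets S(σ) and X \ S̄(σ) are exteriors of each other, i.e. X \ S̄(σ) = int(X \ S(σ)) and S(σ) = int(X \ (X \ S̄(σ))) = int(S̄(σ)). -/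
open TopologicalSpace

lemma key {X : Type*} (S : ℕ → Bool → Set X)
    (hdisj : ∀ n, S n false ∩ S n true = ∅) (k : ℕ) (b : Bool) :
    S k b ∪ dyadicBd S k = (S k (!b))ᶜ := by
  have hd := hdisj k
  ext x
  simp only [dyadicBd, Set.mem_union, Set.mem_compl_iff]
  constructor
  · rintro (hx | hx)
    · intro hx'
      have : x ∈ S k false ∩ S k true := by
        cases b
        · exact ⟨hx, by simpa using hx'⟩
        · exact ⟨by simpa using hx', hx⟩
      rw [hd] at this; exact this
    · intro hx'
      exact hx (by cases b <;> simp_all)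
  · intro hx
    by_cases hb : x ∈ S k b
    · exact Or.inl hb
    · right; intro h
      rcases h with h | h <;> cases b <;> simp_all

/-- A dyadic subbase `S` of a second-countable Hausdorff space is proper iff for every
finite partial function `σ` from ℕ to `{0,1}`, the sets `S(σ)` and `X \ S̄(σ)` are the
exteriors of each other. -/
theorem proper_iff_exteriors (X : Type*) [TopologicalSpace X]
    [SecondCountableTopology X] [T2Space X]
    (S : ℕ → Bool → Set X)
    (hopen : ∀ n a, IsOpen (S n a))
    (hdisj : ∀ n, S n false ∩ S n true = ∅)
    (hsub : (inferInstance : TopologicalSpace X) =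
      TopologicalSpace.generateFrom {U : Set X | ∃ n a, U = S n a}) :
    (∀ (dom : Finset ℕ) (σ : ℕ → Bool),
        dyadicClosed S dom σ = closure (dyadicOpen S dom σ)) ↔
    (∀ (dom : Finset ℕ) (σ : ℕ → Bool),
        (dyadicClosed S dom σ)ᶜ = interior (dyadicOpen S dom σ)ᶜ ∧
        dyadicOpen S dom σ = interior ((dyadicClosed S dom σ)ᶜ)ᶜ) := by
  constructor
  · intro h dom σ
    have hO : IsOpen (dyadicOpen S dom σ) := by
      apply isOpen_biInter_finset
      intro k _
      exact hopen k (σ k)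
    refine ⟨?_, ?_⟩
    · rw [h dom σ, interior_compl]
    · rw [compl_compl]
      -- show dyadicOpen = interior (dyadicClosed)
      apply le_antisymm
      · apply interior_maximal _ hO
        intro x hx
        simp only [dyadicOpen, dyadicClosed, Set.mem_iInter] at *
        exact fun k hk => Or.inl (hx k hk)
      · -- interior C ⊆ O
        intro x hx
        simp only [dyadicOpen, Set.mem_iInter]
        intro k hk
        -- interior C ⊆ interior ((S k (!σ k))ᶜ) = S k (σ k)
        have hsub1 : dyadicClosed S dom σ ⊆ (S k (!(σ k)))ᶜ := by
          rw [← key S hdisj k (σ k)]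
          intro y hy
          simp only [dyadicClosed, Set.mem_iInter] at hy
          exact hy k hk
        have h1 : interior (dyadicClosed S dom σ) ⊆ interior ((S k (!(σ k)))ᶜ) :=
          interior_mono hsub1
        have h2 : interior ((S k (!(σ k)))ᶜ) = S k (σ k) := by
          rw [interior_compl]
          have hh := h {k} (fun _ => !(σ k))
          have hO1 : dyadicOpen S {k} (fun _ => !(σ k)) = S k (!(σ k)) := by
            simp [dyadicOpen]
          have hC1 : dyadicClosed S {k} (fun _ => !(σ k)) = S k (!(σ k)) ∪ dyadicBd S k := by
            simp [dyadicClosed]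
          rw [← hO1, ← hh, hC1, key S hdisj k (!(σ k)), Bool.not_not, compl_compl]
        rw [← h2]
        exact h1 hx
  · intro h dom σ
    have := (h dom σ).1
    rw [interior_compl] at this
    have := congrArg compl this
    rw [compl_compl, compl_compl] at this
    exact this
end

section
/- A dyadic subbase S of a second-countable Hausdorff space X is strongly proper if and only if for every finite partial function σ from ℕ to {0,1,∂}, the sets S(σ) and S(σ_∂) \ S̄(σ) are exteriors of each other in the subspace S(σ_∂), i.e. S(σ_∂) \ S̄(σ) is the interior of S(σ_∂) \ S(σ) in the subspace topology of S(σ_∂), and S(σ) is the interior of S̄(σ) in the subspace topology of S(σ_∂). -/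
open TopologicalSpace

/-- `S(σ)` for a finite partial function `σ` from ℕ to `{0,1,∂}`, encoded by a finite
domain `dom` and values `σ : ℕ → Option Bool` (`some a` means the digit `a`, `none` means `∂`). -/
def dyadicOpen3 {X : Type*} (S : ℕ → Bool → Set X) (dom : Finset ℕ)
    (σ : ℕ → Option Bool) : Set X :=
  ⋂ k ∈ dom, (σ k).elim (dyadicBd S k) (S k)

/-- `S̄(σ)` for a finite partial function `σ` from ℕ to `{0,1,∂}`. -/
def dyadicClosed3 {X : Type*} (S : ℕ → Bool → Set X) (dom : Finset ℕ)
    (σ : ℕ → Option Bool) : Set X :=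
  ⋂ k ∈ dom, (σ k).elim (dyadicBd S k) (fun a => S k a ∪ dyadicBd S k)

/-- `S(σ_∂)`, where `σ_∂` is the restriction of `σ` to the indices with value `∂`. -/
def dyadicDel {X : Type*} (S : ℕ → Bool → Set X) (dom : Finset ℕ)
    (σ : ℕ → Option Bool) : Set X :=
  ⋂ k ∈ dom, (σ k).elim (dyadicBd S k) (fun _ => Set.univ)

/-!
Write `D = S(σ_∂)`, `O = S(σ)` and `C = S̄(σ)`, so that `O ⊆ C ⊆ D` and `D` is closed. The
interior of `D \ O` relative to `D` is `D \ cl O`, so the first exterior condition says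
exactly `C = cl O`. For the second, `O` is `D` cut down by the open sets `S_k^{σ(k)}`, hence
lies in the relative interior of `C`. Conversely, if `x ∈ D` lies in that interior but
`x ∉ S_k^a` for a digit `σ(k) = a`, then `x ∈ S_k^∂`; flipping that digit to `¬a` gives
`σ'` with `x ∈ S̄(σ') = cl S(σ')` and `S(σ') ⊆ D \ C`, so `x ∈ cl (D \ C)`, a
contradiction.
-/

open Set

lemma image_val_interior_setOf_mem {X : Type*} [TopologicalSpace X] (D A : Set X) :
    Subtype.val '' interior {y : D | (y : X) ∈ A} = D \ closure (D \ A) := by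
  have h : {y : D | (y : X) ∈ A} = (Subtype.val ⁻¹' A : Set D) := rfl
  rw [h, ← compl_compl (Subtype.val ⁻¹' A : Set D), interior_compl,
    ← preimage_compl, Topology.IsEmbedding.subtypeVal.closure_eq_preimage_closure_image,
    Subtype.image_preimage_coe, ← preimage_compl, Subtype.image_preimage_coe]
  rfl

section Dyadic

variable {X : Type*} (S : ℕ → Bool → Set X) (dom : Finset ℕ) (σ : ℕ → Option Bool)

lemma dyadicOpen3_subset_dyadicDel : dyadicOpen3 S dom σ ⊆ dyadicDel S dom σ :=
  biInter_mono subset_rfl fun k _ ↦ by cases σ k <;> simp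

lemma dyadicClosed3_subset_dyadicDel : dyadicClosed3 S dom σ ⊆ dyadicDel S dom σ :=
  biInter_mono subset_rfl fun k _ ↦ by cases σ k <;> simp

lemma dyadicOpen3_subset_dyadicClosed3 : dyadicOpen3 S dom σ ⊆ dyadicClosed3 S dom σ :=
  biInter_mono subset_rfl fun k _ ↦ by cases σ k <;> simp

lemma dyadicDel_inter_eq_dyadicOpen3 :
    dyadicDel S dom σ ∩ ⋂ k ∈ dom, (σ k).elim univ (S k) = dyadicOpen3 S dom σ := by
  ext x
  simp only [dyadicDel, dyadicOpen3, mem_inter_iff, mem_iInter, ← forall_and]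
  refine forall₂_congr fun k _ ↦ ?_
  cases σ k <;> simp

lemma dyadicDel_update_some {k : ℕ} {a : Bool} (hk : σ k = some a) (b : Bool) :
    dyadicDel S dom (Function.update σ k (some b)) = dyadicDel S dom σ := by
  refine iInter_congr fun j ↦ iInter_congr fun _ ↦ ?_
  rcases eq_or_ne j k with rfl | hj
  · simp [hk]
  · simp [hj]

lemma mem_dyadicClosed3_update_of_mem_dyadicBd {x : X} {k : ℕ} (hx : x ∈ dyadicClosed3 S dom σ)
    (hxk : x ∈ dyadicBd S k) (b : Bool) :
    x ∈ dyadicClosed3 S dom (Function.update σ k (some b)) := by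
  simp only [dyadicClosed3, mem_iInter] at hx ⊢
  intro j hj
  rcases eq_or_ne j k with rfl | hjk
  · simp [hxk]
  · simpa [hjk] using hx j hj

lemma dyadicOpen3_update_subset {k : ℕ} {b : Bool} (hk : k ∈ dom) :
    dyadicOpen3 S dom (Function.update σ k (some b)) ⊆ S k b := fun x hx ↦ by
  simpa using mem_iInter₂.1 hx k hk

lemma disjoint_union_dyadicBd (hdisj : ∀ n, S n false ∩ S n true = ∅) (k : ℕ) (a : Bool) :
    Disjoint (S k a ∪ dyadicBd S k) (S k (!a)) := by
  rw [disjoint_union_left, dyadicBd, disjoint_compl_left_iff_subset]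
  have hdisj_k := disjoint_iff_inter_eq_empty.2 (hdisj k)
  cases a
  · exact ⟨hdisj_k, subset_union_right⟩
  · exact ⟨hdisj_k.symm, subset_union_left⟩

lemma dyadicOpen3_update_not_subset_diff (hdisj : ∀ n, S n false ∩ S n true = ∅)
    {k : ℕ} {a : Bool} (hk : k ∈ dom) (hσk : σ k = some a) :
    dyadicOpen3 S dom (Function.update σ k (some (!a))) ⊆
      dyadicDel S dom σ \ dyadicClosed3 S dom σ := by
  intro y hy
  refine ⟨dyadicDel_update_some S dom σ hσk (!a) ▸ dyadicOpen3_subset_dyadicDel S dom _ hy,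
    fun hyC ↦ ?_⟩
  have hya : y ∈ S k a ∪ dyadicBd S k := by simpa [hσk] using mem_iInter₂.1 hyC k hk
  exact disjoint_left.1 (disjoint_union_dyadicBd S hdisj k a) hya
    (dyadicOpen3_update_subset S dom σ hk hy)

variable [TopologicalSpace X]

lemma isClosed_dyadicDel (hopen : ∀ n a, IsOpen (S n a)) : IsClosed (dyadicDel S dom σ) :=
  isClosed_biInter fun k _ ↦ by
    cases σ k
    · exact ((hopen k false).union (hopen k true)).isClosed_compl
    · exact isClosed_univ

lemma dyadicOpen3_subset_diff_closure (hopen : ∀ n a, IsOpen (S n a)) :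
    dyadicOpen3 S dom σ ⊆
      dyadicDel S dom σ \ closure (dyadicDel S dom σ \ dyadicClosed3 S dom σ) := by
  rw [← dyadicDel_inter_eq_dyadicOpen3]
  set W := ⋂ k ∈ dom, (σ k).elim univ (S k)
  have hW : IsOpen W := isOpen_biInter_finset fun k _ ↦ by
    cases σ k
    · exact isOpen_univ
    · exact hopen k _
  have hWC : dyadicDel S dom σ ∩ W ⊆ dyadicClosed3 S dom σ := by
    rw [dyadicDel_inter_eq_dyadicOpen3]
    exact dyadicOpen3_subset_dyadicClosed3 S dom σ
  rintro x ⟨hxD, hxW⟩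
  refine ⟨hxD, fun hx ↦ ?_⟩
  obtain ⟨y, hyW, hyD, hyC⟩ := mem_closure_iff.1 hx W hW hxW
  exact hyC (hWC ⟨hyD, hyW⟩)

lemma diff_closure_subset_dyadicOpen3 (hdisj : ∀ n, S n false ∩ S n true = ∅)
    (hsp : ∀ (dom : Finset ℕ) (σ : ℕ → Option Bool),
      dyadicClosed3 S dom σ = closure (dyadicOpen3 S dom σ)) :
    dyadicDel S dom σ \ closure (dyadicDel S dom σ \ dyadicClosed3 S dom σ) ⊆
      dyadicOpen3 S dom σ := by
  rintro x ⟨hxD, hx⟩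
  have hxC : x ∈ dyadicClosed3 S dom σ := by
    by_contra hxC
    exact hx (subset_closure ⟨hxD, hxC⟩)
  simp only [dyadicOpen3, mem_iInter]
  intro k hk
  cases hσk : σ k with
  | none => simpa [hσk] using mem_iInter₂.1 hxD k hk
  | some a =>
    by_contra hxa
    have hxk : x ∈ dyadicBd S k := by
      have hxak : x ∈ S k a ∪ dyadicBd S k := by simpa [hσk] using mem_iInter₂.1 hxC k hk
      exact hxak.resolve_left hxa
    have hxρ := mem_dyadicClosed3_update_of_mem_dyadicBd S dom σ hxC hxk (!a)
    rw [hsp] at hxρ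
    exact hx (closure_mono (dyadicOpen3_update_not_subset_diff S dom σ hdisj hk hσk) hxρ)

end Dyadic

theorem stronglyProper_iff_relative_exteriors_general (X : Type*) [TopologicalSpace X]
    (S : ℕ → Bool → Set X)
    (hopen : ∀ n a, IsOpen (S n a))
    (hdisj : ∀ n, S n false ∩ S n true = ∅) :
    (∀ (dom : Finset ℕ) (σ : ℕ → Option Bool),
        dyadicClosed3 S dom σ = closure (dyadicOpen3 S dom σ)) ↔
    (∀ (dom : Finset ℕ) (σ : ℕ → Option Bool),
        (Subtype.val ''
            interior {y : ↥(dyadicDel S dom σ) | (y : X) ∈ (dyadicOpen3 S dom σ)ᶜ} =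
          dyadicDel S dom σ \ dyadicClosed3 S dom σ) ∧
        (Subtype.val ''
            interior {y : ↥(dyadicDel S dom σ) | (y : X) ∈ dyadicClosed3 S dom σ} =
          dyadicOpen3 S dom σ)) := by
  have hclosure (dom σ) : closure (dyadicOpen3 S dom σ) ⊆ dyadicDel S dom σ :=
    closure_minimal (dyadicOpen3_subset_dyadicDel S dom σ) (isClosed_dyadicDel S dom σ hopen)
  simp only [image_val_interior_setOf_mem, sdiff_compl,
    inter_eq_right.2 (dyadicOpen3_subset_dyadicDel S _ _),
    sdiff_right_inj (hclosure _ _) (dyadicClosed3_subset_dyadicDel S _ _)]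
  refine ⟨fun hsp dom σ ↦ ⟨(hsp dom σ).symm, ?_⟩, fun h dom σ ↦ (h dom σ).1.symm⟩
  exact (diff_closure_subset_dyadicOpen3 S dom σ hdisj hsp).antisymm
    (dyadicOpen3_subset_diff_closure S dom σ hopen)

/-- A dyadic subbase `S` of a second-countable Hausdorff space is strongly proper iff for
every finite partial function `σ` from ℕ to `{0,1,∂}`, the sets `S(σ)` and
`S(σ_∂) \ S̄(σ)` are the exteriors of each other in the subspace `S(σ_∂)`:
`S(σ_∂) \ S̄(σ)` is the interior of `S(σ_∂) \ S(σ)` relative to `S(σ_∂)`, and `S(σ)` is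
the interior of `S̄(σ)` relative to `S(σ_∂)`. -/
theorem stronglyProper_iff_relative_exteriors (X : Type*) [TopologicalSpace X]
    [SecondCountableTopology X] [T2Space X]
    (S : ℕ → Bool → Set X)
    (hopen : ∀ n a, IsOpen (S n a))
    (hdisj : ∀ n, S n false ∩ S n true = ∅)
    (hsub : (inferInstance : TopologicalSpace X) =
      TopologicalSpace.generateFrom {U : Set X | ∃ n a, U = S n a}) :
    (∀ (dom : Finset ℕ) (σ : ℕ → Option Bool),
        dyadicClosed3 S dom σ = closure (dyadicOpen3 S dom σ)) ↔
    (∀ (dom : Finset ℕ) (σ : ℕ → Option Bool),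
        (Subtype.val ''
            interior {y : ↥(dyadicDel S dom σ) | (y : X) ∈ (dyadicOpen3 S dom σ)ᶜ} =
          dyadicDel S dom σ \ dyadicClosed3 S dom σ) ∧
        (Subtype.val ''
            interior {y : ↥(dyadicDel S dom σ) | (y : X) ∈ dyadicClosed3 S dom σ} =
          dyadicOpen3 S dom σ)) :=
  stronglyProper_iff_relative_exteriors_general X S hopen hdisj
end

section
/- The Gray subbase G is a strongly proper dyadic subbase of the unit interval I = [0,1]: the sets G_n^0, G_n^1 are disjoint open sets forming a subbase of I, and for every finite partial function σ from ℕ to {0,1,∂}, the equality Ḡ(σ) = cl(G(σ)) holds, where G_n^∂ := I \ (G_n^0 ∪ G_n^1), G(σ) := ⋂_{k ∈ dom(σ)} G_k^{σ(k)} and Ḡ(σ) := ⋂_{k ∈ dom(σ)} (G_k^{σ(k)} ∪ G_k^∂). -/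
open TopologicalSpace

/-- The unit interval `I = [0,1] ⊆ ℝ`. -/
abbrev unitInt : Set ℝ := Set.Icc (0 : ℝ) 1

/-- `f_n(x) = -cos(2^n π x)` on the unit interval. -/
noncomputable def grayFun (n : ℕ) (x : ↥unitInt) : ℝ :=
  -Real.cos (2 ^ n * Real.pi * (x : ℝ))

/-- The Gray subbase: `G_n^0 = {x ∈ I : f_n(x) < 0}`, `G_n^1 = {x ∈ I : f_n(x) > 0}`. -/
def graySubbase (n : ℕ) (a : Bool) : Set ↥unitInt :=
  if a then {x | 0 < grayFun n x} else {x | grayFun n x < 0}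

/-- The boundary set `G_k^∂ = I \ (G_k^0 ∪ G_k^1)`. -/
def grayBd (k : ℕ) : Set ↥unitInt :=
  (graySubbase k false ∪ graySubbase k true)ᶜ

/-- `G(σ)` for a finite partial function `σ` from ℕ to `{0,1,∂}`, encoded by a finite
domain `dom` and values `σ : ℕ → Option Bool` (`some a` means the digit `a`, `none` means `∂`). -/
def grayOpen3 (dom : Finset ℕ) (σ : ℕ → Option Bool) : Set ↥unitInt :=
  ⋂ k ∈ dom, (σ k).elim (grayBd k) (graySubbase k)

/-- `Ḡ(σ)` for a finite partial function `σ` from ℕ to `{0,1,∂}`. -/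
def grayClosed3 (dom : Finset ℕ) (σ : ℕ → Option Bool) : Set ↥unitInt :=
  ⋂ k ∈ dom, (σ k).elim (grayBd k) (fun a => graySubbase k a ∪ grayBd k)

namespace GrayAux
open Real Filter

lemma grayFun_continuous (n : ℕ) : Continuous (grayFun n) := by
  unfold grayFun; fun_prop

lemma isOpen_graySubbase (n : ℕ) (a : Bool) : IsOpen (graySubbase n a) := by
  cases a <;> simp only [graySubbase, if_true, if_false, Bool.false_eq_true, Bool.true_eq_false]
  · exact isOpen_lt (grayFun_continuous n) continuous_const
  · exact isOpen_lt continuous_const (grayFun_continuous n)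

lemma mem_graySubbase_true {n : ℕ} {x : ↥unitInt} :
    x ∈ graySubbase n true ↔ 0 < grayFun n x := Iff.rfl

lemma mem_graySubbase_false {n : ℕ} {x : ↥unitInt} :
    x ∈ graySubbase n false ↔ grayFun n x < 0 := Iff.rfl

lemma mem_grayBd {k : ℕ} {x : ↥unitInt} : x ∈ grayBd k ↔ grayFun k x = 0 := by
  simp only [grayBd, Set.mem_compl_iff, Set.mem_union, mem_graySubbase_true,
    mem_graySubbase_false]
  constructor
  · intro h; push_neg at h; linarith [h.1, h.2]
  · intro h; simp [h]

lemma grayFun_eq_zero_iff {n : ℕ} {x : ↥unitInt} :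
    grayFun n x = 0 ↔ ∃ k : ℤ, (x : ℝ) = (2 * k + 1) / 2 ^ (n + 1) := by
  rw [grayFun, neg_eq_zero, Real.cos_eq_zero_iff]
  constructor
  · rintro ⟨k, hk⟩
    refine ⟨k, ?_⟩
    have hpi := Real.pi_ne_zero
    have h1 : Real.pi * ((2:ℝ)^(n+1) * (x:ℝ)) = Real.pi * (2 * k + 1) := by
      rw [pow_succ]; linear_combination 2 * hk
    have h2 := mul_left_cancel₀ hpi h1
    have hp : ((2:ℝ)^(n+1)) ≠ 0 := by positivity
    field_simp
    linear_combination h2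
  · rintro ⟨k, hk⟩
    refine ⟨k, ?_⟩
    rw [hk]
    have hp : ((2:ℝ)^(n+1)) ≠ 0 := by positivity
    field_simp
    ring

lemma level_unique {n j : ℕ} {x : ↥unitInt} (hn : grayFun n x = 0) (hj : grayFun j x = 0) :
    n = j := by
  obtain ⟨k, hk⟩ := grayFun_eq_zero_iff.1 hn
  obtain ⟨l, hl⟩ := grayFun_eq_zero_iff.1 hj
  by_contra hne
  wlog h : n < j generalizing n j k l
  · exact this hj hn l hl k hk (Ne.symm hne) (by omega)
  have hr : ((2:ℝ) * k + 1) * 2 ^ (j + 1) = (2 * l + 1) * 2 ^ (n + 1) := by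
    have h0 : ((2:ℝ) * k + 1) / 2 ^ (n + 1) = (2 * l + 1) / 2 ^ (j + 1) := hk.symm.trans hl
    have hp1 : ((2:ℝ)^(n+1)) ≠ 0 := by positivity
    have hp2 : ((2:ℝ)^(j+1)) ≠ 0 := by positivity
    field_simp at h0
    linarith
  have key : (2 * k + 1) * 2 ^ (j + 1) = (2 * l + 1) * 2 ^ (n + 1) := by exact_mod_cast hr
  have hsplit : (2:ℤ) ^ (j + 1) = 2 ^ (n + 1) * 2 ^ (j - n) := by
    rw [← pow_add]; congr 1; omega
  rw [hsplit, show ((2:ℤ)*k+1) * (2^(n+1) * 2^(j-n)) = ((2*k+1) * 2^(j-n)) * 2^(n+1) by ring]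
    at key
  have hcan : (2 * k + 1) * 2 ^ (j - n) = 2 * l + 1 :=
    mul_right_cancel₀ (by positivity) key
  have hjn : (2:ℤ) ^ (j - n) = 2 * 2 ^ (j - n - 1) := by
    rw [← pow_succ']; congr 1; omega
  rw [hjn] at hcan
  set u : ℤ := (2 * k + 1) * 2 ^ (j - n - 1) with hu
  have : 2 * u = 2 * l + 1 := by rw [hu]; linarith [hcan]
  omega

lemma interior_of_bd {m : ℕ} {x : ↥unitInt} (h : grayFun m x = 0) :
    0 < (x : ℝ) ∧ (x : ℝ) < 1 := by
  obtain ⟨k, hk⟩ := grayFun_eq_zero_iff.1 h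
  have hx0 : 0 ≤ (x : ℝ) := x.2.1
  have hx1 : (x : ℝ) ≤ 1 := x.2.2
  have hp : (0:ℝ) < 2 ^ (m + 1) := by positivity
  rw [hk] at hx0 hx1 ⊢
  have h1 : (0:ℝ) ≤ 2 * k + 1 := by
    by_contra hneg
    push_neg at hneg
    have : ((2:ℝ) * k + 1) / 2 ^ (m+1) < 0 := div_neg_of_neg_of_pos hneg hp
    linarith
  have h1' : (1:ℤ) ≤ 2 * k + 1 := by
    have : (0:ℤ) ≤ 2 * k + 1 := by exact_mod_cast h1
    omega
  have h2 : (2:ℝ) * k + 1 ≤ 2 ^ (m + 1) := (div_le_one hp).1 hx1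
  have h2' : (2 * k + 1 : ℤ) ≤ 2 ^ (m + 1) := by exact_mod_cast h2
  have h2'' : (2 * k + 1 : ℤ) < 2 ^ (m + 1) := by
    rcases lt_or_eq_of_le h2' with h | h
    · exact h
    · exfalso
      have : (2:ℤ) ∣ 2 ^ (m+1) := dvd_pow_self 2 (Nat.succ_ne_zero m)
      omega
  constructor
  · apply div_pos _ hp
    have : (1:ℝ) ≤ 2 * k + 1 := by exact_mod_cast h1'
    linarith
  · rw [div_lt_one hp]
    exact_mod_cast h2''

lemma sin_one_or {m : ℕ} {x : ↥unitInt} (h : grayFun m x = 0) :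
    Real.sin (2 ^ m * Real.pi * (x:ℝ)) = 1 ∨ Real.sin (2 ^ m * Real.pi * (x:ℝ)) = -1 := by
  have hc : Real.cos (2 ^ m * Real.pi * (x:ℝ)) = 0 := by
    rw [grayFun, neg_eq_zero] at h; exact h
  have hsq := Real.sin_sq_add_cos_sq (2 ^ m * Real.pi * (x:ℝ))
  rw [hc] at hsq
  have : Real.sin (2 ^ m * Real.pi * (x:ℝ)) * Real.sin (2 ^ m * Real.pi * (x:ℝ)) = 1 := by
    nlinarith
  exact mul_self_eq_one_iff.1 this

noncomputable def gc (n : ℕ) (x : ℝ) : ℝ := -Real.cos (2 ^ n * Real.pi * x)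

lemma gc_double (n : ℕ) (x : ℝ) : gc (n + 1) x = gc n (2 * x) := by
  unfold gc; congr 1; ring

lemma gc_reflect (n : ℕ) (x : ℝ) : gc (n + 1) x = gc n (2 - 2 * x) := by
  unfold gc
  congr 1
  have h : (2:ℝ) ^ n * Real.pi * (2 - 2 * x)
      = ((2:ℝ)^n : ℝ) * (2 * Real.pi) - 2 ^ (n+1) * Real.pi * x := by
    ring
  rw [h, show ((2:ℝ)^n : ℝ) = ((2^n : ℤ) : ℝ) by push_cast; ring,
    Real.cos_int_mul_two_pi_sub]

lemma claimB (N : ℕ) : ∀ x y : ℝ, 0 ≤ x → x ≤ 1 → 0 ≤ y → y ≤ 1 →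
    (1/2 : ℝ) ^ N ≤ |x - y| →
    ∃ n ≤ N, (gc n x < 0 ∧ 0 ≤ gc n y) ∨ (0 < gc n x ∧ gc n y ≤ 0) := by
  induction N with
  | zero =>
    intro x y hx0 hx1 hy0 hy1 h
    rw [pow_zero] at h
    have hg0 : gc 0 (0:ℝ) = -1 := by norm_num [gc]
    have hg1 : gc 0 (1:ℝ) = 1 := by norm_num [gc, Real.cos_pi]
    rcases le_total x y with hxy | hxy
    · rw [abs_of_nonpos (by linarith)] at h
      have hx : x = 0 := by linarith
      have hy : y = 1 := by linarith
      subst hx; subst hy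
      exact ⟨0, le_rfl, Or.inl ⟨by rw [hg0]; norm_num, by rw [hg1]; norm_num⟩⟩
    · rw [abs_of_nonneg (by linarith)] at h
      have hx : x = 1 := by linarith
      have hy : y = 0 := by linarith
      subst hx; subst hy
      exact ⟨0, le_rfl, Or.inr ⟨by rw [hg1]; norm_num, by rw [hg0]; norm_num⟩⟩
  | succ N ih =>
    intro x y hx0 hx1 hy0 hy1 h
    have hpi := Real.pi_pos
    have hdouble : x ≤ 1/2 → y ≤ 1/2 →
        ∃ n ≤ N + 1, (gc n x < 0 ∧ 0 ≤ gc n y) ∨ (0 < gc n x ∧ gc n y ≤ 0) := by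
      intro hx2 hy2
      obtain ⟨n, hn, hc⟩ := ih (2*x) (2*y) (by linarith) (by linarith) (by linarith) (by linarith)
        (by rw [show 2*x - 2*y = 2*(x-y) by ring, abs_mul, abs_two]
            calc (1/2:ℝ)^N = 2 * (1/2)^(N+1) := by ring
            _ ≤ 2 * |x - y| := by linarith)
      exact ⟨n+1, by omega, by rw [gc_double, gc_double]; exact hc⟩
    have hreflect : 1/2 ≤ x → 1/2 ≤ y →
        ∃ n ≤ N + 1, (gc n x < 0 ∧ 0 ≤ gc n y) ∨ (0 < gc n x ∧ gc n y ≤ 0) := by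
      intro hx2 hy2
      obtain ⟨n, hn, hc⟩ := ih (2-2*x) (2-2*y) (by linarith) (by linarith) (by linarith)
        (by linarith)
        (by rw [show (2-2*x) - (2-2*y) = 2*(y-x) by ring, abs_mul, abs_two, abs_sub_comm]
            have he : (1/2:ℝ)^N = 2 * (1/2)^(N+1) := by ring
            linarith)
      exact ⟨n+1, by omega, by rw [gc_reflect, gc_reflect]; exact hc⟩
    have hneg : ∀ z : ℝ, 0 ≤ z → z < 1/2 → gc 0 z < 0 := by
      intro z hz0 hz2
      have : 0 < Real.cos (Real.pi * z) :=
        Real.cos_pos_of_mem_Ioo ⟨by nlinarith, by nlinarith⟩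
      simp only [gc, pow_zero, one_mul]
      linarith
    have hpos : ∀ z : ℝ, 1/2 < z → z ≤ 1 → 0 < gc 0 z := by
      intro z hz2 hz1
      have : Real.cos (Real.pi * z) < 0 :=
        Real.cos_neg_of_pi_div_two_lt_of_lt (by nlinarith) (by nlinarith)
      simp only [gc, pow_zero, one_mul]
      linarith
    rcases le_or_gt x (1/2) with hx2 | hx2 <;> rcases le_or_gt y (1/2) with hy2 | hy2
    · exact hdouble hx2 hy2
    · rcases lt_or_eq_of_le hx2 with hx2' | hx2'
      · exact ⟨0, by omega, Or.inl ⟨hneg x hx0 hx2', le_of_lt (hpos y hy2 hy1)⟩⟩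
      · exact hreflect (le_of_eq hx2'.symm) (le_of_lt hy2)
    · rcases lt_or_eq_of_le hy2 with hy2' | hy2'
      · exact ⟨0, by omega, Or.inr ⟨hpos x hx2 hx1, le_of_lt (hneg y hy0 hy2')⟩⟩
      · exact hreflect (le_of_lt hx2) (le_of_eq hy2'.symm)
    · exact hreflect (le_of_lt hx2) (le_of_lt hy2)

lemma topo_eq :
    (inferInstance : TopologicalSpace ↥unitInt) =
      TopologicalSpace.generateFrom {U : Set ↥unitInt | ∃ n a, U = graySubbase n a} := by
  set gset : Set (Set ↥unitInt) := {U : Set ↥unitInt | ∃ n a, U = graySubbase n a} with hgset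
  apply le_antisymm
  · exact le_generateFrom (by rintro U ⟨n, a, rfl⟩; exact isOpen_graySubbase n a)
  · rw [TopologicalSpace.le_def]
    intro U hU
    have key : ∀ x : ↥unitInt, x ∈ U →
        ∃ V, @IsOpen _ (generateFrom gset) V ∧ x ∈ V ∧ V ⊆ U := by
      intro x hx
      obtain ⟨ε, hε, hball⟩ := Metric.isOpen_iff.1 hU x hx
      obtain ⟨N, hN⟩ := exists_pow_lt_of_lt_one hε (by norm_num : (1/2:ℝ) < 1)
      refine ⟨⋂ n ∈ Finset.range (N+1),
        (if 0 < grayFun n x then graySubbase n true else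
          if grayFun n x < 0 then graySubbase n false else Set.univ), ?_, ?_, ?_⟩
      · refine @isOpen_biInter_finset _ _ (generateFrom gset) _ _ (fun n _ => ?_)
        by_cases h1 : 0 < grayFun n x
        · rw [if_pos h1]; exact GenerateOpen.basic _ ⟨n, true, rfl⟩
        · rw [if_neg h1]
          by_cases h2 : grayFun n x < 0
          · rw [if_pos h2]; exact GenerateOpen.basic _ ⟨n, false, rfl⟩
          · rw [if_neg h2]; exact GenerateOpen.univ
      · simp only [Set.mem_iInter]
        intro n _
        by_cases h1 : 0 < grayFun n x
        · rw [if_pos h1]; exact mem_graySubbase_true.2 h1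
        · rw [if_neg h1]
          by_cases h2 : grayFun n x < 0
          · rw [if_pos h2]; exact mem_graySubbase_false.2 h2
          · rw [if_neg h2]; trivial
      · intro y hy
        simp only [Set.mem_iInter] at hy
        by_contra hyU
        have hdist : ε ≤ dist y x := by
          by_contra hlt
          exact hyU (hball (by push_neg at hlt; exact hlt))
        have habs : (1/2 : ℝ)^N ≤ |(x:ℝ) - (y:ℝ)| := by
          rw [Subtype.dist_eq, Real.dist_eq, abs_sub_comm] at hdist
          linarith
        obtain ⟨n, hn, hc⟩ := claimB N (x:ℝ) (y:ℝ) x.2.1 x.2.2 y.2.1 y.2.2 habs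
        have hyn := hy n (Finset.mem_range.2 (by omega))
        have hgx : gc n (x:ℝ) = grayFun n x := rfl
        have hgy : gc n (y:ℝ) = grayFun n y := rfl
        rw [hgx, hgy] at hc
        rcases hc with ⟨h1, h2⟩ | ⟨h1, h2⟩
        · rw [if_neg (by linarith), if_pos h1] at hyn
          have := mem_graySubbase_false.1 hyn
          linarith
        · rw [if_pos h1] at hyn
          have := mem_graySubbase_true.1 hyn
          linarith
    choose V hVopen hVmem hVsub using key
    have hUeq : U = ⋃ x : U, V x x.2 :=
      subset_antisymm (fun x hx => Set.mem_iUnion.2 ⟨⟨x, hx⟩, hVmem x hx⟩)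
        (Set.iUnion_subset fun x => hVsub x x.2)
    rw [hUeq]
    exact @isOpen_iUnion _ _ (generateFrom gset) _ (fun x => hVopen x x.2)

lemma union_bd_eq (k : ℕ) (a : Bool) : graySubbase k a ∪ grayBd k = (graySubbase k (!a))ᶜ := by
  ext x
  simp only [Set.mem_union, Set.mem_compl_iff, mem_grayBd]
  cases a
  · simp only [mem_graySubbase_false, Bool.not_false, mem_graySubbase_true]
    constructor
    · rintro (h | h) hpos <;> linarith
    · intro h
      rcases lt_trichotomy (grayFun k x) 0 with h1 | h1 | h1
      · exact Or.inl h1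
      · exact Or.inr h1
      · exact absurd h1 h
  · simp only [mem_graySubbase_true, Bool.not_true, mem_graySubbase_false]
    constructor
    · rintro (h | h) hneg <;> linarith
    · intro h
      rcases lt_trichotomy (grayFun k x) 0 with h1 | h1 | h1
      · exact absurd h1 h
      · exact Or.inr h1
      · exact Or.inl h1

lemma isClosed_grayClosed3 (dom : Finset ℕ) (σ : ℕ → Option Bool) :
    IsClosed (grayClosed3 dom σ) := by
  unfold grayClosed3
  refine isClosed_biInter (fun k _ => ?_)
  cases hσ : σ k with
  | none =>
    exact ((isOpen_graySubbase k false).union (isOpen_graySubbase k true)).isClosed_compl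
  | some a =>
    show IsClosed (graySubbase k a ∪ grayBd k)
    rw [union_bd_eq]
    exact (isOpen_graySubbase k (!a)).isClosed_compl

lemma grayOpen3_subset (dom : Finset ℕ) (σ : ℕ → Option Bool) :
    grayOpen3 dom σ ⊆ grayClosed3 dom σ := by
  apply Set.iInter₂_mono
  intro k _
  cases σ k with
  | none => exact subset_rfl
  | some a => exact Set.subset_union_left

lemma closed_subset_closure (dom : Finset ℕ) (σ : ℕ → Option Bool) :
    grayClosed3 dom σ ⊆ closure (grayOpen3 dom σ) := by
  intro x hx
  have hxmem : ∀ k ∈ dom, x ∈ (σ k).elim (grayBd k) (fun a => graySubbase k a ∪ grayBd k) := by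
    simpa only [grayClosed3, Set.mem_iInter] using hx
  by_cases hex : ∃ m ∈ dom, ∃ a, σ m = some a ∧ grayFun m x = 0
  case neg =>
    push_neg at hex
    apply subset_closure
    simp only [grayOpen3, Set.mem_iInter]
    intro k hk
    have h := hxmem k hk
    cases hσ : σ k with
    | none => rw [hσ] at h; exact h
    | some a =>
      rw [hσ] at h
      rcases h with h | h
      · exact h
      · exact absurd (mem_grayBd.1 h) (hex k hk a hσ)
  case pos =>
  obtain ⟨m, hmdom, a, hσm, hm0⟩ := hex
  have hcos : Real.cos (2 ^ m * Real.pi * (x:ℝ)) = 0 := by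
    rw [grayFun, neg_eq_zero] at hm0; exact hm0
  obtain ⟨hx0, hx1⟩ := interior_of_bd hm0
  set c : ℝ := min (x:ℝ) (1 - (x:ℝ)) with hc
  have hcpos : 0 < c := lt_min hx0 (by linarith)
  have hcx : c ≤ (x:ℝ) := min_le_left _ _
  have hcx1 : c ≤ 1 - (x:ℝ) := min_le_right _ _
  set sx : ℝ := Real.sin (2 ^ m * Real.pi * (x:ℝ)) with hsxdef
  have hsx : sx = 1 ∨ sx = -1 := sin_one_or hm0
  set s : ℝ := if a then sx else -sx with hsdef
  have hs1 : s = 1 ∨ s = -1 := by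
    rcases hsx with h | h <;> cases a <;> simp [hsdef, h]
  have hss : sx * s = if a then 1 else -1 := by
    rcases hsx with h | h <;> cases a <;> simp [hsdef, h]
  have hsin_mul : ∀ t : ℝ, Real.sin (s * t) = s * Real.sin t := by
    intro t
    rcases hs1 with h | h <;> rw [h]
    · rw [one_mul, one_mul]
    · rw [neg_one_mul, neg_one_mul, Real.sin_neg]
  have habs : ∀ i : ℕ, |s * (c / ((i:ℝ) + 1))| ≤ c := by
    intro i
    rw [abs_mul]
    have h1 : |s| = 1 := by rcases hs1 with h | h <;> rw [h] <;> norm_num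
    have hi1 : (1:ℝ) ≤ (i:ℝ) + 1 := by
      have : (0:ℝ) ≤ (i:ℝ) := Nat.cast_nonneg i
      linarith
    rw [h1, one_mul, abs_of_nonneg (by positivity)]
    exact div_le_self hcpos.le hi1
  have humem : ∀ i : ℕ, (x:ℝ) + s * (c / ((i:ℝ) + 1)) ∈ unitInt := by
    intro i
    have h := habs i
    rw [abs_le] at h
    exact ⟨by linarith [h.1], by linarith [h.2]⟩
  set u : ℕ → ↥unitInt := fun i => ⟨(x:ℝ) + s * (c / ((i:ℝ) + 1)), humem i⟩ with hu
  have hucoe : ∀ i : ℕ, ((u i : ℝ)) = (x:ℝ) + s * (c / ((i:ℝ) + 1)) := fun i => rfl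
  have hbase : Filter.Tendsto (fun i : ℕ => 1 / ((i:ℝ) + 1)) Filter.atTop (nhds 0) :=
    tendsto_one_div_add_atTop_nhds_zero_nat
  have htend0 : Filter.Tendsto (fun i : ℕ => (x:ℝ) + s * (c / ((i:ℝ) + 1)))
      Filter.atTop (nhds (x:ℝ)) := by
    have h2 := (hbase.const_mul (s * c)).const_add (x:ℝ)
    simp only [mul_zero, add_zero] at h2
    exact h2.congr (fun i => by ring)
  have htu : Filter.Tendsto u Filter.atTop (nhds x) := by
    rw [tendsto_subtype_rng]
    exact htend0
  have htsmall : ∀ᶠ i : ℕ in Filter.atTop, 2 ^ m * Real.pi * (c / ((i:ℝ) + 1)) < Real.pi := by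
    have h2 : Filter.Tendsto (fun i : ℕ => 2 ^ m * Real.pi * (c / ((i:ℝ) + 1)))
        Filter.atTop (nhds 0) := by
      have h3 := hbase.const_mul (2 ^ m * Real.pi * c)
      rw [mul_zero] at h3
      exact h3.congr (fun i => by ring)
    exact h2.eventually_lt_const Real.pi_pos
  have hall : ∀ k ∈ dom, ∀ᶠ i in Filter.atTop,
      u i ∈ (σ k).elim (grayBd k) (graySubbase k) := by
    intro k hk
    by_cases hkm : k = m
    · subst hkm
      rw [hσm]
      filter_upwards [htsmall] with i hi
      have harg : (2:ℝ) ^ k * Real.pi * ((u i : ℝ)) =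
          2 ^ k * Real.pi * (x:ℝ) + s * (2 ^ k * Real.pi * (c / ((i:ℝ) + 1))) := by
        rw [hucoe]; ring
      have hval : grayFun k (u i) =
          (if a then 1 else -1) * Real.sin (2 ^ k * Real.pi * (c / ((i:ℝ) + 1))) := by
        rw [grayFun, harg, Real.cos_add, hcos, zero_mul, hsin_mul, ← hsxdef, ← hss]
        ring
      have hsinpos : 0 < Real.sin (2 ^ k * Real.pi * (c / ((i:ℝ) + 1))) :=
        Real.sin_pos_of_pos_of_lt_pi (by positivity) hi
      show u i ∈ graySubbase k a
      cases a
      · refine mem_graySubbase_false.2 ?_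
        rw [hval]
        simp only [Bool.false_eq_true, if_false]
        linarith
      · refine mem_graySubbase_true.2 ?_
        rw [hval]
        simp only [if_true]
        linarith
    · have hk0 : grayFun k x ≠ 0 := fun h0 => hkm (level_unique h0 hm0)
      have h := hxmem k hk
      cases hσ2 : σ k with
      | none =>
        rw [hσ2] at h
        exact absurd (mem_grayBd.1 h) hk0
      | some b =>
        rw [hσ2] at h
        have hxin : x ∈ graySubbase k b := by
          rcases h with h | h
          · exact h
          · exact absurd (mem_grayBd.1 h) hk0
        exact htu.eventually_mem ((isOpen_graySubbase k b).mem_nhds hxin)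
  have hev : ∀ᶠ i in Filter.atTop, u i ∈ grayOpen3 dom σ := by
    have h2 := (Filter.eventually_all_finset dom).2 hall
    filter_upwards [h2] with i hi
    simp only [grayOpen3, Set.mem_iInter]
    exact hi
  exact mem_closure_of_tendsto htu hev

end GrayAux

/-- The Gray subbase is a strongly proper dyadic subbase of the unit interval. -/
theorem graySubbase_stronglyProper :
    (∀ n a, IsOpen (graySubbase n a)) ∧
    (∀ n, graySubbase n false ∩ graySubbase n true = ∅) ∧
    ((inferInstance : TopologicalSpace ↥unitInt) =
      TopologicalSpace.generateFrom {U : Set ↥unitInt | ∃ n a, U = graySubbase n a}) ∧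
    (∀ (dom : Finset ℕ) (σ : ℕ → Option Bool),
      grayClosed3 dom σ = closure (grayOpen3 dom σ)) := by
  refine ⟨GrayAux.isOpen_graySubbase, ?_, GrayAux.topo_eq, ?_⟩
  · intro n
    ext x
    simp only [Set.mem_inter_iff, GrayAux.mem_graySubbase_false, GrayAux.mem_graySubbase_true,
      Set.mem_empty_iff_false, iff_false, not_and]
    intro h1 h2
    linarith
  · intro dom σ
    exact subset_antisymm (GrayAux.closed_subset_closure dom σ)
      (closure_minimal (GrayAux.grayOpen3_subset dom σ) (GrayAux.isClosed_grayClosed3 dom σ))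
end

section
/- Let X be a separable metric space. There exist a sequence (f_n)_{n ∈ ℕ} of continuous functions f_n : X → ℝ and a sequence (I_n)_{n ∈ ℕ} of nonempty open intervals of ℝ such that for every choice of real numbers c_n ∈ I_n (n ∈ ℕ), the family {U^a(f_n, c_n) : n ∈ ℕ, a ∈ {0,1}} is a subbase of the topology of X. -/
open TopologicalSpace

/-- There exist continuous functions `f_n : X → ℝ` and nonempty open intervals `I_n ⊆ ℝ`
such that for every choice of `c_n ∈ I_n`, the family
`{U^a(f_n, c_n) : n ∈ ℕ, a ∈ {0,1}}` is a subbase of the topology of `X`. -/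
theorem exists_functions_intervals_subbase (X : Type*) [MetricSpace X] [SeparableSpace X] :
    ∃ (f : ℕ → X → ℝ) (I : ℕ → Set ℝ),
      (∀ n, Continuous (f n)) ∧
      (∀ n, ∃ a b : ℝ, a < b ∧ I n = Set.Ioo a b) ∧
      (∀ c : ℕ → ℝ, (∀ n, c n ∈ I n) →
        (inferInstance : TopologicalSpace X) =
          TopologicalSpace.generateFrom
            {U : Set X | ∃ n, U = {x | f n x < c n} ∨ U = {x | c n < f n x}}) := by
  rcases isEmpty_or_nonempty X with hX | hX
  · refine ⟨fun _ _ => 0, fun _ => Set.Ioo 0 1, fun n => continuous_const,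
      fun n => ⟨0, 1, one_pos, rfl⟩, fun c hc => ?_⟩
    refine TopologicalSpace.ext_iff.mpr fun s => ?_
    rw [Set.eq_empty_of_isEmpty s]
    exact iff_of_true isOpen_empty (@isOpen_empty X (TopologicalSpace.generateFrom _))
  · obtain ⟨u, hu⟩ := TopologicalSpace.exists_dense_seq X
    refine ⟨fun n x => dist x (u n.unpair.1),
      fun n => Set.Ioo (1 / (n.unpair.2 + 2)) (1 / (n.unpair.2 + 1)),
      fun n => continuous_id.dist continuous_const,
      fun n => ⟨_, _, one_div_lt_one_div_of_lt (by positivity) (by norm_num), rfl⟩, ?_⟩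
    · intro c hc
      refine le_antisymm ?_ ?_
      · apply le_generateFrom
        rintro U ⟨n, hU | hU⟩ <;> subst hU
        · exact isOpen_lt (continuous_id.dist continuous_const) continuous_const
        · exact isOpen_lt continuous_const (continuous_id.dist continuous_const)
      · intro s hs
        -- show s is generated
        have key : ∀ x ∈ s, ∃ V, V ∈ {U : Set X | ∃ n, U = {x | dist x (u n.unpair.1) < c n}
            ∨ U = {x | c n < dist x (u n.unpair.1)}} ∧ x ∈ V ∧ V ⊆ s := by
          intro x hx
          obtain ⟨ε, hε, hball⟩ := Metric.isOpen_iff.mp hs x hx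
          obtain ⟨m, hm⟩ := exists_nat_one_div_lt (half_pos hε)
          obtain ⟨k, hk⟩ := (Metric.denseRange_iff.mp hu) x (1 / (m + 2))
            (by positivity)
          set n := Nat.pair k m with hn
          have hun : n.unpair = (k, m) := Nat.unpair_pair k m
          have hcn := hc n
          simp only [hun, Set.mem_Ioo] at hcn
          refine ⟨{y | dist y (u n.unpair.1) < c n}, ⟨n, Or.inl rfl⟩, ?_, ?_⟩
          · show dist x (u n.unpair.1) < c n
            rw [hun]
            exact lt_trans hk hcn.1
          · intro y hy
            apply hball
            have hy' : dist y (u k) < c n := by rw [hun] at hy; exact hy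
            have h1 : dist y x ≤ dist y (u k) + dist (u k) x :=
              dist_triangle y (u k) x
            have h2 : dist (u k) x < 1 / (m + 2) := by rwa [dist_comm]
            have h3 : (1 : ℝ) / (m + 2) ≤ 1 / (m + 1) := by
              apply one_div_le_one_div_of_le <;> linarith
            have : dist y x < ε := by
              calc dist y x ≤ dist y (u k) + dist (u k) x := h1
                _ < c n + 1 / (m + 2) := by linarith
                _ < 1 / (m + 1) + 1 / (m + 1) := by linarith [hcn.2]
                _ < ε / 2 + ε / 2 := by linarith
                _ = ε := by ring
            exact this
        have hsT : s = ⋃₀ {V | (V ∈ {U : Set X | ∃ n, U = {x | dist x (u n.unpair.1) < c n}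
            ∨ U = {x | c n < dist x (u n.unpair.1)}}) ∧ V ⊆ s} := by
          ext x
          constructor
          · intro hx
            obtain ⟨V, hV, hxV, hVs⟩ := key x hx
            exact ⟨V, ⟨hV, hVs⟩, hxV⟩
          · rintro ⟨V, ⟨_, hVs⟩, hxV⟩
            exact hVs hxV
        rw [hsT]
        exact TopologicalSpace.GenerateOpen.sUnion _ fun V hV => .basic V hV.1
end

section
/- Let X be a locally compact separable metric space, r ∈ ℕ, and f : X → ℝ^r a continuous map. If fat_f X is empty, then the image f(X) has empty interior in ℝ^r. -/
/-! Away from fat points, the compact neighbourhoods given by local compactness have images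
with empty interior. Countably many of them cover `X`, and their images are compact, hence
closed and nowhere dense, so `f(X)` is meagre; by the Baire category theorem in `ℝ^r` it has
empty interior. -/

open TopologicalSpace

/-- The set of fat points of `A ⊆ X` with respect to `f : X → ℝ^r`: the points `x ∈ A`
such that for every neighbourhood `V` of `x` in `X`, the image `f '' (A ∩ V)` has nonempty
interior in `ℝ^r`. -/
def fatPoints {X : Type*} [TopologicalSpace X] {r : ℕ}
    (f : X → EuclideanSpace ℝ (Fin r)) (A : Set X) : Set X :=
  {x ∈ A | ∀ V ∈ nhds x, (interior (f '' (A ∩ V))).Nonempty}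

open Set Topology

theorem IsMeagre.interior_eq_empty {Y : Type*} [TopologicalSpace Y] [BaireSpace Y] {s : Set Y}
    (hs : IsMeagre s) : interior s = ∅ :=
  not_nonempty_iff_eq_empty.1 fun hne ↦
    not_isMeagre_of_isOpen isOpen_interior hne (hs.mono interior_subset)

theorem exists_isCompact_mem_nhds_interior_image_eq_empty_of_notMem_fatPoints
    {X : Type*} [TopologicalSpace X] [LocallyCompactSpace X] {r : ℕ}
    {f : X → EuclideanSpace ℝ (Fin r)} {A : Set X} {x : X} (hxA : x ∈ A)
    (hx : x ∉ fatPoints f A) : ∃ K ∈ 𝓝 x, IsCompact K ∧ interior (f '' (A ∩ K)) = ∅ := by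
  obtain ⟨V, hV, hVint⟩ : ∃ V ∈ 𝓝 x, interior (f '' (A ∩ V)) = ∅ := by
    simpa [fatPoints, hxA, not_nonempty_iff_eq_empty] using hx
  obtain ⟨K, hK, hKV, hKc⟩ := local_compact_nhds hV
  refine ⟨K, hK, hKc, eq_empty_of_subset_empty ?_⟩
  exact hVint ▸ interior_mono (image_mono (inter_subset_inter_right A hKV))

theorem isMeagre_image_univ_of_forall_exists_isCompact_mem_nhds
    {X Y : Type*} [TopologicalSpace X] [LindelofSpace X] [TopologicalSpace Y] [T2Space Y]
    {f : X → Y} (hf : Continuous f)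
    (h : ∀ x, ∃ K ∈ 𝓝 x, IsCompact K ∧ interior (f '' K) = ∅) : IsMeagre (f '' univ) := by
  choose K hKnhds hKc hKint using h
  obtain ⟨t, htc, htcover⟩ := countable_cover_nhds hKnhds
  rw [← htcover, image_iUnion₂]
  refine isMeagre_biUnion htc fun x _ ↦ IsNowhereDense.isMeagre ?_
  exact ((hKc x).image hf).isClosed.isNowhereDense_iff.2 (hKint x)

/-- If a locally compact separable metric space has no fat point with respect to a
continuous map `f : X → ℝ^r`, then the image `f(X)` has empty interior (is codense). -/
theorem interior_image_empty_of_no_fatPoints (X : Type*) [MetricSpace X]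
    [SeparableSpace X] [LocallyCompactSpace X] (r : ℕ)
    (f : X → EuclideanSpace ℝ (Fin r)) (hf : Continuous f)
    (h : fatPoints f Set.univ = ∅) :
    interior (f '' Set.univ) = ∅ := by
  have : SecondCountableTopology X := UniformSpace.secondCountable_of_separable X
  refine (isMeagre_image_univ_of_forall_exists_isCompact_mem_nhds hf fun x ↦ ?_).interior_eq_empty
  simpa using exists_isCompact_mem_nhds_interior_image_eq_empty_of_notMem_fatPoints
    (mem_univ x) (h.symm ▸ notMem_empty x)
end

section
/- Let r ∈ ℕ and let K ⊆ ℝ^{r+1} be a closed nowhere dense set. Then the set {c ∈ ℝ : K ∩ H_c is nowhere dense in the subspace H_c} is comeagre in ℝ. -/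
/-- The hyperplane `H_c = {(x_0, …, x_r) ∈ ℝ^{r+1} : x_r = c}`. -/
def hyperplane (r : ℕ) (c : ℝ) : Set (EuclideanSpace ℝ (Fin (r + 1))) :=
  {x | x (Fin.last r) = c}

/-!
If the slice of a closed set `K ⊆ Y × X` over `y` has nonempty interior, it contains a nonempty
member `U` of a countable basis of `X`, i.e. `{y} × U ⊆ K`. For fixed `U` the set of such `y` is
closed, and its interior `V` is empty because `V × U` is an open subset of `K`. So the `y` with
fat slices lie in countably many closed nowhere dense sets. The hyperplane slices of
`K ⊆ ℝ^{r+1}` are the slices of `K` viewed in `ℝ × ℝ^r`.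
-/

open Set TopologicalSpace Topology

section Fibres

variable {X Y : Type*} [TopologicalSpace X] [TopologicalSpace Y] {K : Set (Y × X)}

lemma isClosed_setOf_subset_preimage_prodMk (hK : IsClosed K) (U : Set X) :
    IsClosed {y | U ⊆ Prod.mk y ⁻¹' K} := by
  simp only [ofPred_forall, subset_def, mem_preimage]
  exact isClosed_biInter fun x _ ↦ hK.preimage (continuous_id.prodMk continuous_const)

lemma interior_setOf_subset_preimage_prodMk_eq_empty (hKnd : IsNowhereDense K) {U : Set X}
    (hU : IsOpen U) (hU₀ : U.Nonempty) : interior {y | U ⊆ Prod.mk y ⁻¹' K} = ∅ := by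
  set V := interior {y | U ⊆ Prod.mk y ⁻¹' K}
  have hVU : V ×ˢ U ⊆ interior (closure K) :=
    interior_maximal (fun p ⟨hy, hx⟩ ↦ subset_closure (interior_subset hy hx))
      (isOpen_interior.prod hU)
  rw [hKnd, subset_empty_iff, prod_eq_empty_iff] at hVU
  exact hVU.resolve_right hU₀.ne_empty

lemma isNowhereDense_setOf_subset_preimage_prodMk (hK : IsClosed K) (hKnd : IsNowhereDense K)
    {U : Set X} (hU : IsOpen U) (hU₀ : U.Nonempty) :
    IsNowhereDense {y | U ⊆ Prod.mk y ⁻¹' K} := by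
  rw [(isClosed_setOf_subset_preimage_prodMk hK U).isNowhereDense_iff]
  exact interior_setOf_subset_preimage_prodMk_eq_empty hKnd hU hU₀

theorem isMeagre_setOf_not_isNowhereDense_preimage_prodMk [SecondCountableTopology X]
    (hK : IsClosed K) (hKnd : IsNowhereDense K) :
    IsMeagre {y | ¬IsNowhereDense (Prod.mk y ⁻¹' K)} := by
  set B := {U ∈ countableBasis X | U.Nonempty}
  have hB : B.Countable := (countable_countableBasis X).mono (sep_subset _ _)
  refine (isMeagre_biUnion hB fun U hU ↦ (isNowhereDense_setOf_subset_preimage_prodMk hK hKnd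
    ((isBasis_countableBasis X).isOpen hU.1) hU.2).isMeagre).mono fun y hy ↦ ?_
  rw [mem_ofPred_eq, (hK.preimage (Continuous.prodMk_right y)).isNowhereDense_iff] at hy
  obtain ⟨x, hx⟩ := nonempty_iff_ne_empty.2 hy
  obtain ⟨U, hUB, hxU, hUint⟩ :=
    (isBasis_countableBasis X).exists_subset_of_mem_open hx isOpen_interior
  exact mem_biUnion ⟨hUB, x, hxU⟩ (hUint.trans interior_subset)

end Fibres

def snocHomeomorph (r : ℕ) : ℝ × (Fin r → ℝ) ≃ₜ EuclideanSpace ℝ (Fin (r + 1)) :=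
  (Homeomorph.mk (Fin.snocEquiv fun _ ↦ ℝ) (by fun_prop) (by fun_prop)).trans
    (PiLp.homeomorph 2 _).symm

@[simp]
lemma snocHomeomorph_apply (r : ℕ) (c : ℝ) (z : Fin r → ℝ) :
    snocHomeomorph r (c, z) = WithLp.toLp 2 (Fin.snoc z c) :=
  rfl

lemma snocHomeomorph_init {r : ℕ} {c : ℝ} {y : EuclideanSpace ℝ (Fin (r + 1))}
    (hy : y ∈ hyperplane r c) : snocHomeomorph r (c, Fin.init y) = y := by
  subst hy
  exact (snocHomeomorph r).apply_symm_apply y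

lemma isNowhereDense_hyperplane_slice {r : ℕ} {K : Set (EuclideanSpace ℝ (Fin (r + 1)))}
    {c : ℝ} (h : IsNowhereDense (Prod.mk c ⁻¹' (snocHomeomorph r ⁻¹' K))) :
    IsNowhereDense {y : hyperplane r c | (y : EuclideanSpace ℝ (Fin (r + 1))) ∈ K} := by
  have hmem (z : Fin r → ℝ) : snocHomeomorph r (c, z) ∈ hyperplane r c := by
    simp [hyperplane]
  set f := codRestrict _ _ hmem
  have hf : IsInducing f :=
    ((snocHomeomorph r).isEmbedding.comp (isEmbedding_prodMkRight c)).isInducing.codRestrict _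
  have hf_surj : Function.Surjective f :=
    fun y ↦ ⟨Fin.init y.1, Subtype.ext (snocHomeomorph_init y.2)⟩
  simpa only [hf_surj.image_preimage] using
    hf.isNowhereDense_image (s := f ⁻¹' {y | (y : EuclideanSpace ℝ (Fin (r + 1))) ∈ K}) h

/-- If `K ⊆ ℝ^{r+1}` is closed and nowhere dense, then the set of `c ∈ ℝ` such that
`K ∩ H_c` is nowhere dense in the subspace `H_c` is comeagre in ℝ (its complement is
meagre). -/
theorem comeagre_nowhereDense_fibres (r : ℕ)
    (K : Set (EuclideanSpace ℝ (Fin (r + 1))))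
    (hKclosed : IsClosed K) (hKnd : IsNowhereDense K) :
    IsMeagre ({c : ℝ |
      IsNowhereDense {y : ↥(hyperplane r c) | (y : EuclideanSpace ℝ (Fin (r + 1))) ∈ K}}ᶜ) := by
  set Φ := snocHomeomorph r
  have hK : IsClosed (Φ ⁻¹' K) := hKclosed.preimage Φ.continuous
  have hKnd' : IsNowhereDense (Φ ⁻¹' K) := by
    rw [← Φ.image_symm]
    exact Φ.symm.isInducing.isNowhereDense_image hKnd
  exact (isMeagre_setOf_not_isNowhereDense_preimage_prodMk hK hKnd').mono
    fun c hc hfib ↦ hc (isNowhereDense_hyperplane_slice hfib)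
end

section
/- Let r ∈ ℕ and let M ⊆ ℝ^{r+1} be a meagre set. Then the set {c ∈ ℝ : M ∩ H_c is meagre in the subspace H_c} is comeagre in ℝ. -/
open Set Filter TopologicalSpace

section KuratowskiUlam

variable {X Y : Type*} [TopologicalSpace X] [TopologicalSpace Y]

lemma Dense.image_fst_inter_univ_prod {U : Set (X × Y)} (hU : Dense U) {V : Set Y}
    (hV : IsOpen V) (hVne : V.Nonempty) : Dense (Prod.fst '' (U ∩ univ ×ˢ V)) := by
  refine dense_iff_inter_open.2 fun W hW ⟨x, hxW⟩ => ?_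
  obtain ⟨⟨x', y⟩, ⟨hx'W, hyV⟩, hU⟩ :=
    hU.inter_open_nonempty _ (hW.prod hV) ⟨(x, hVne.some), hxW, hVne.some_mem⟩
  exact ⟨x', hx'W, (x', y), ⟨hU, trivial, hyV⟩, rfl⟩

lemma eventually_residual_dense_fiber [SecondCountableTopology Y] {U : Set (X × Y)}
    (hUo : IsOpen U) (hU : Dense U) : ∀ᶠ x in residual X, Dense {y | (x, y) ∈ U} := by
  obtain ⟨B, hBc, -, hB⟩ := exists_countable_basis Y
  have hmeets : ∀ V ∈ B, ∀ᶠ x in residual X, V.Nonempty → x ∈ Prod.fst '' (U ∩ univ ×ˢ V) := by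
    intro V hV
    by_cases hVne : V.Nonempty
    · filter_upwards [residual_of_dense_open
        (isOpenMap_fst _ (hUo.inter (isOpen_univ.prod (hB.isOpen hV))))
        (hU.image_fst_inter_univ_prod (hB.isOpen hV) hVne)] with x hx using fun _ => hx
    · exact Eventually.of_forall fun _ h => absurd h hVne
  filter_upwards [(eventually_countable_ball hBc).2 hmeets] with x hx
  refine hB.dense_iff.2 fun V hV hVne => ?_
  obtain ⟨⟨_, y⟩, ⟨hyU, -, hyV⟩, rfl⟩ := hx V hV hVne
  exact ⟨y, hyV, hyU⟩

theorem IsMeagre.eventually_isMeagre_fiber [SecondCountableTopology Y] {M : Set (X × Y)}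
    (hM : IsMeagre M) : ∀ᶠ x in residual X, IsMeagre {y | (x, y) ∈ M} := by
  obtain ⟨S, hSo, hSd, hSc, hSM⟩ := mem_residual_iff.mp hM
  filter_upwards [(eventually_countable_ball hSc).2 fun t ht =>
    eventually_residual_dense_fiber (hSo t ht) (hSd t ht)] with x hx
  refine mem_of_superset ((countable_bInter_mem hSc).2 fun t ht => residual_of_dense_open
    ((hSo t ht).preimage (Continuous.prodMk_right x)) (hx t ht)) fun y hy hyM => ?_
  exact hSM (mem_sInter.2 fun t ht => mem_iInter₂.1 hy t ht) hyM

end KuratowskiUlam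

namespace Homeomorph

variable {X Y Z : Type*} [TopologicalSpace X] [TopologicalSpace Y] [TopologicalSpace Z]

def fstFiber (e : Z ≃ₜ X × Y) (x : X) : {z : Z // (e z).1 = x} ≃ₜ Y where
  toFun z := (e z).2
  invFun y := ⟨e.symm (x, y), by simp⟩
  left_inv z := Subtype.ext (e.symm_apply_eq.2 (Prod.ext z.2.symm rfl))
  right_inv y := by simp
  continuous_toFun := by fun_prop
  continuous_invFun := by fun_prop

theorem eventually_isMeagre_fiber [SecondCountableTopology Y] (e : Z ≃ₜ X × Y) {M : Set Z}
    (hM : IsMeagre M) : ∀ᶠ x in residual X, IsMeagre {z : {z : Z // (e z).1 = x} | ↑z ∈ M} := by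
  have hM' := hM.preimage_of_isOpenMap e.symm.continuous e.symm.isOpenMap
  filter_upwards [hM'.eventually_isMeagre_fiber] with x hx
  convert hx.preimage_of_isOpenMap (e.fstFiber x).continuous (e.fstFiber x).isOpenMap using 1
  ext z
  change _ ↔ ((e.fstFiber x).symm (e.fstFiber x z) : Z) ∈ M
  rw [symm_apply_apply]
  exact Iff.rfl

end Homeomorph

/-- If `M ⊆ ℝ^{r+1}` is meagre, then the set of `c ∈ ℝ` such that `M ∩ H_c` is meagre in
the subspace `H_c` is comeagre in ℝ (its complement is meagre). -/
theorem comeagre_meagre_fibres (r : ℕ)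
    (M : Set (EuclideanSpace ℝ (Fin (r + 1)))) (hM : IsMeagre M) :
    IsMeagre ({c : ℝ |
      IsMeagre {y : ↥(hyperplane r c) | (y : EuclideanSpace ℝ (Fin (r + 1))) ∈ M}}ᶜ) := by
  rw [IsMeagre, compl_compl]
  -- `hyperplane r c` is definitionally the fibre `{z | (e z).1 = c}` of this splitting `e`.
  exact ((EuclideanSpace.equiv (Fin (r + 1)) ℝ).toHomeomorph.trans
    (Homeomorph.funSplitAt ℝ (Fin.last r))).eventually_isMeagre_fiber hM
end
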